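/- Let U be a commutative K-algebra and ∂₁,…,∂ₙ pairwise commuting K-linear derivations of U. Then the K-module A = (Fin n → U) of formal vector fields Σᵢ uᵢ∂ᵢ, with the bilinear multiplication determined by (u∂ᵢ)∘(v∂ⱼ) = v·∂ⱼ(u)·∂ᵢ (i.e., (f∘g)ᵢ = Σⱼ gⱼ·∂ⱼ(fᵢ)), satisfies the right-symmetric identity (a∘b)∘c − a∘(b∘c) = (a∘c)∘b − a∘(c∘b) for all a,b,c ∈ A. (This is the half-Witt algebra Wₙ^{rsym}.) -/

import Mathlib

/-! The first-order terms of `(a∘b)∘c` cancel against `a∘(b∘c)` by the Leibniz rule, leaving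
the associator `Σₖ Σⱼ cₖ bⱼ ∂ₖ∂ⱼ aᵢ`; it is symmetric in `b, c` because the `∂ᵢ` commute. -/

open Finset

/-- The multiplication of the half-Witt algebra `Wₙ^{rsym}`:
`(u∂ᵢ)∘(v∂ⱼ) = v·∂ⱼ(u)·∂ᵢ`, i.e. `(f∘g)ᵢ = Σⱼ gⱼ·∂ⱼ(fᵢ)`. -/
def wittMul {K U : Type*} [CommRing K] [CommRing U] [Algebra K U]
    (n : ℕ) (D : Fin n → U →ₗ[K] U) (f g : Fin n → U) : Fin n → U :=
  fun i => ∑ j, g j * D j (f i)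

section

variable {K U : Type*} [CommRing K] [CommRing U] [Algebra K U] {n : ℕ} (D : Fin n → U →ₗ[K] U)

theorem wittMul_wittMul_left_apply
    (hleib : ∀ (i : Fin n) (u v : U), D i (u * v) = D i u * v + u * D i v)
    (a b c : Fin n → U) (i : Fin n) :
    wittMul n D (wittMul n D a b) c i
      = ∑ k, ∑ j, (c k * D k (b j) * D j (a i) + c k * b j * D k (D j (a i))) := by
  simp only [wittMul, map_sum, hleib, mul_sum]
  exact sum_congr rfl fun k _ => sum_congr rfl fun j _ => by ring

theorem wittMul_wittMul_right_apply (a b c : Fin n → U) (i : Fin n) :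
    wittMul n D a (wittMul n D b c) i = ∑ k, ∑ j, c k * D k (b j) * D j (a i) := by
  simp only [wittMul, sum_mul]
  exact sum_comm

theorem wittMul_associator_apply
    (hleib : ∀ (i : Fin n) (u v : U), D i (u * v) = D i u * v + u * D i v)
    (a b c : Fin n → U) (i : Fin n) :
    (wittMul n D (wittMul n D a b) c - wittMul n D a (wittMul n D b c)) i
      = ∑ k, ∑ j, c k * b j * D k (D j (a i)) := by
  simp only [Pi.sub_apply, wittMul_wittMul_left_apply D hleib, wittMul_wittMul_right_apply,
    sum_add_distrib, add_sub_cancel_left]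

end

/-- The half-Witt algebra `Wₙ^{rsym}` of formal vector fields is right-symmetric. -/
theorem wittMul_rightSymmetric
    {K U : Type*} [CommRing K] [CommRing U] [Algebra K U]
    (n : ℕ) (D : Fin n → U →ₗ[K] U)
    (hleib : ∀ (i : Fin n) (u v : U), D i (u * v) = D i u * v + u * D i v)
    (hcomm : ∀ (i j : Fin n) (u : U), D i (D j u) = D j (D i u)) :
    ∀ a b c : Fin n → U,
      wittMul n D (wittMul n D a b) c - wittMul n D a (wittMul n D b c)
        = wittMul n D (wittMul n D a c) b - wittMul n D a (wittMul n D c b) := by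
  intro a b c
  funext i
  rw [wittMul_associator_apply D hleib, wittMul_associator_apply D hleib, sum_comm]
  exact sum_congr rfl fun k _ => sum_congr rfl fun j _ => by rw [hcomm]; ring
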